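/- Let μ be a Borel measure on ℝ^d that assigns positive measure to every nonempty open set, and for each j ∈ {1,…,d} let f_j : ℝ^d → ℝ be continuously differentiable (C¹) with ∂ₖ f_j square-integrable with respect to μ for every k. Define the d × d matrix W(f) by [W(f)]_{kj} = (∫ (∂ₖ f_j(x))² dμ(x))^{1/2}, and let W(f) ∘ W(f) denote its entrywise square. Then trace(exp(W(f) ∘ W(f))) = d if and only if the directed graph G(f), which has an edge from k to j exactly when f_j is NOT independent of coordinate k, has no directed cycle (no vertex j with (j,j) in the transitive closure of the edge relation). -/

import Mathlib

open MeasureTheory Matrix NormedSpace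

/-!
The entries `∫ (∂ₖ f j)² dμ` of `W(f) ∘ W(f)` are nonnegative, so
`trace (exp (W ∘ W)) = d + ∑_{n ≥ 1} trace ((W ∘ W)ⁿ) / n!` is `d` plus a sum of nonnegative
terms, and the diagonal entry `((W ∘ W)ⁿ) j j` is positive exactly when there is a closed walk of
length `n` at `j` along nonzero entries. Since `μ` charges every nonempty open set, an entry
`∫ (∂ₖ f j)² dμ` vanishes iff the continuous function `∂ₖ f j` vanishes identically, i.e. iff
`f j` does not depend on coordinate `k`; so the nonzero entries are exactly the edges of `G(f)`.
-/

def IndepCoord {d : ℕ} {α : Type*} (f : (Fin d → ℝ) → α) (k : Fin d) : Prop :=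
  ∀ (x : Fin d → ℝ) (a b : ℝ), f (Function.update x k a) = f (Function.update x k b)

namespace Matrix

variable {m R : Type*} [Fintype m]

theorem trace_eq_zero_iff_of_nonneg [AddCommMonoid R] [PartialOrder R] [IsOrderedAddMonoid R]
    {M : Matrix m m R} (hM : ∀ i j, 0 ≤ M i j) :
    trace M = 0 ↔ ∀ j, M j j = 0 := by
  simp [trace, Finset.sum_eq_zero_iff_of_nonneg fun j _ => hM j j]

section OrderedSemiring

variable [Semiring R] [PartialOrder R] [IsOrderedRing R] [NoZeroDivisors R]

theorem mul_apply_ne_zero_iff_of_nonneg {A B : Matrix m m R} (hA : ∀ i j, 0 ≤ A i j)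
    (hB : ∀ i j, 0 ≤ B i j) (i j : m) :
    (A * B) i j ≠ 0 ↔ ∃ k, A i k ≠ 0 ∧ B k j ≠ 0 := by
  simp only [mul_apply, ne_eq, Finset.sum_eq_zero_iff_of_nonneg
    (fun k _ => mul_nonneg (hA i k) (hB k j)), Finset.mem_univ, true_implies, not_forall,
    mul_eq_zero, not_or]

theorem exists_pow_succ_apply_ne_zero_iff_transGen [DecidableEq m] {M : Matrix m m R}
    (hM : ∀ i j, 0 ≤ M i j) (i j : m) :
    (∃ n : ℕ, (M ^ (n + 1)) i j ≠ 0) ↔ Relation.TransGen (fun a b => M a b ≠ 0) i j := by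
  constructor
  · rintro ⟨n, hn⟩
    induction n generalizing j with
    | zero => exact .single (by simpa using hn)
    | succ n ih =>
      rw [pow_succ, mul_apply_ne_zero_iff_of_nonneg (pow_apply_nonneg hM _) hM] at hn
      obtain ⟨k, hik, hkj⟩ := hn
      exact (ih k hik).tail hkj
  · intro h
    induction h with
    | single hij => exact ⟨0, by simpa using hij⟩
    | @tail k l _ hkl ih =>
      obtain ⟨n, hn⟩ := ih
      refine ⟨n + 1, ?_⟩
      rw [pow_succ, mul_apply_ne_zero_iff_of_nonneg (pow_apply_nonneg hM _) hM]
      exact ⟨k, hn, hkl⟩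

end OrderedSemiring

variable [DecidableEq m]

theorem hasSum_trace_exp {𝕂 : Type*} [RCLike 𝕂] (M : Matrix m m 𝕂) :
    HasSum (fun n => (n.factorial⁻¹ : 𝕂) * trace (M ^ n)) (trace (exp M)) := by
  -- matrices carry no canonical norm; the operator norm induces the product topology
  open scoped Norms.Operator in
  have h := (exp_series_hasSum_exp' (𝕂 := 𝕂) M).map (traceLinearMap m 𝕂 𝕂)
    continuous_id.matrix_trace
  simp only [Function.comp_def, traceLinearMap_apply, trace_smul, smul_eq_mul] at h
  exact h

theorem trace_exp_eq_card_iff {M : Matrix m m ℝ} (hM : ∀ i j, 0 ≤ M i j) :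
    trace (exp M) = Fintype.card m ↔ ∀ j, ¬ Relation.TransGen (fun a b => M a b ≠ 0) j j := by
  have hsum := (hasSum_nat_add_iff' 1).2 (hasSum_trace_exp M)
  simp only [Finset.range_one, Finset.sum_singleton, Nat.factorial_zero, Nat.cast_one, inv_one,
    pow_zero, trace_one, one_mul] at hsum
  have hterm_nonneg (n : ℕ) : 0 ≤ ((n + 1).factorial⁻¹ : ℝ) * trace (M ^ (n + 1)) :=
    mul_nonneg (by positivity) (Finset.sum_nonneg fun j _ => pow_apply_nonneg hM _ j j)
  calc trace (exp M) = Fintype.card m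
      ↔ HasSum (fun n => ((n + 1).factorial⁻¹ : ℝ) * trace (M ^ (n + 1))) 0 := by
        rw [← sub_eq_zero]
        exact ⟨fun h => h ▸ hsum, hsum.unique⟩
    _ ↔ ∀ n, trace (M ^ (n + 1)) = 0 := by
        rw [hasSum_zero_iff_of_nonneg hterm_nonneg, funext_iff]
        refine forall_congr' fun n => ?_
        simp [Nat.factorial_ne_zero]
    _ ↔ ∀ j n, (M ^ (n + 1)) j j = 0 := by
        simp only [trace_eq_zero_iff_of_nonneg (pow_apply_nonneg hM _)]
        exact forall_comm
    _ ↔ ∀ j, ¬ Relation.TransGen (fun a b => M a b ≠ 0) j j := by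
        simp only [← exists_pow_succ_apply_ne_zero_iff_transGen hM, not_exists, not_not]

end Matrix

theorem integral_sq_eq_zero_iff_of_continuous {X : Type*} [TopologicalSpace X]
    [MeasurableSpace X] {μ : Measure X} [μ.IsOpenPosMeasure] {g : X → ℝ} (hg : Continuous g)
    (hint : Integrable (fun x => g x ^ 2) μ) :
    ∫ x, g x ^ 2 ∂μ = 0 ↔ g = 0 := by
  rw [integral_eq_zero_iff_of_nonneg (fun x => sq_nonneg (g x)) hint,
    Continuous.ae_eq_iff_eq μ (by fun_prop) continuous_zero]
  simp [funext_iff]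

theorem HasFDerivAt.hasDerivAt_update {ι E : Type*} [Fintype ι] [DecidableEq ι]
    [NormedAddCommGroup E] [NormedSpace ℝ E] {f : (ι → ℝ) → E}
    {f' : (ι → ℝ) →L[ℝ] E} {x : ι → ℝ} {k : ι} {t : ℝ}
    (hf : HasFDerivAt f f' (Function.update x k t)) :
    HasDerivAt (fun s => f (Function.update x k s)) (f' (Pi.single k 1)) t :=
  hf.comp_hasDerivAt t (_root_.hasDerivAt_update x k t)

theorem indepCoord_iff_fderiv_apply_single_eq_zero {d : ℕ} {E : Type*} [NormedAddCommGroup E]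
    [NormedSpace ℝ E] {f : (Fin d → ℝ) → E} (hf : Differentiable ℝ f) (k : Fin d) :
    IndepCoord f k ↔ ∀ x, fderiv ℝ f x (Pi.single k 1) = 0 := by
  have hderiv (x : Fin d → ℝ) (t : ℝ) :=
    (hf (Function.update x k t)).hasFDerivAt.hasDerivAt_update
  constructor
  · intro hf_indep x
    have hconst : (fun s => f (Function.update x k s)) = fun _ => f x := by
      funext s
      simpa using hf_indep x s (x k)
    have h := hderiv x (x k)
    rw [hconst, Function.update_eq_self] at h
    exact h.unique (hasDerivAt_const (x k) (f x))
  · intro hzero x a b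
    refine is_const_of_deriv_eq_zero (fun t => (hderiv x t).differentiableAt) (fun t => ?_) a b
    exact (hderiv x t).deriv.trans (hzero _)

theorem integral_sq_fderiv_apply_single_eq_zero_iff {d : ℕ} {μ : Measure (Fin d → ℝ)}
    [μ.IsOpenPosMeasure] {f : (Fin d → ℝ) → ℝ} (hf : ContDiff ℝ 1 f) (k : Fin d)
    (hint : Integrable (fun x => (fderiv ℝ f x (Pi.single k 1)) ^ 2) μ) :
    ∫ x, (fderiv ℝ f x (Pi.single k 1)) ^ 2 ∂μ = 0 ↔ IndepCoord f k := by
  rw [integral_sq_eq_zero_iff_of_continuous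
      ((hf.continuous_fderiv one_ne_zero).clm_apply continuous_const) hint,
    indepCoord_iff_fderiv_apply_single_eq_zero (hf.differentiable one_ne_zero), funext_iff]
  rfl

/-- Nonparametric acyclicity characterization: with `[W(f)]ₖⱼ = ‖∂ₖ f ⱼ‖_{L²(μ)}` for C¹
functions `f ⱼ` and an open-positive measure `μ`, `trace (exp (W(f) ∘ W(f))) = d` if and only
if the graph with an edge `k → j` exactly when `f j` is not independent of coordinate `k` has
no directed cycle. -/
theorem trace_exp_hadamard_W_eq_dim_iff_acyclic (d : ℕ)
    (μ : Measure (Fin d → ℝ)) [μ.IsOpenPosMeasure]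
    (f : Fin d → (Fin d → ℝ) → ℝ) (hf : ∀ j, ContDiff ℝ 1 (f j))
    (hint : ∀ j k, Integrable
      (fun x => (fderiv ℝ (f j) x (Pi.single k 1)) ^ 2) μ) :
    (NormedSpace.exp
        (Matrix.hadamard
          (Matrix.of fun k j : Fin d =>
            Real.sqrt (∫ x, (fderiv ℝ (f j) x (Pi.single k 1)) ^ 2 ∂μ))
          (Matrix.of fun k j : Fin d =>
            Real.sqrt (∫ x, (fderiv ℝ (f j) x (Pi.single k 1)) ^ 2 ∂μ)))).trace = d ↔
      ∀ j : Fin d,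
        ¬ Relation.TransGen (fun k j : Fin d => ¬ IndepCoord (f j) k) j j := by
  set W : Matrix (Fin d) (Fin d) ℝ :=
    of fun k j => ∫ x, (fderiv ℝ (f j) x (Pi.single k 1)) ^ 2 ∂μ
  have hW_nonneg (k j : Fin d) : 0 ≤ W k j := integral_nonneg fun x => sq_nonneg _
  have hhadamard : hadamard (of fun k j => √(W k j)) (of fun k j => √(W k j)) = W := by
    ext k j
    exact Real.mul_self_sqrt (hW_nonneg k j)
  have hedge : (fun k j => W k j ≠ 0) = fun k j => ¬ IndepCoord (f j) k := by
    ext k j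
    exact not_congr (integral_sq_fderiv_apply_single_eq_zero_iff (hf j) k (hint j k))
  have key := trace_exp_eq_card_iff hW_nonneg
  rw [Fintype.card_fin, hedge] at key
  exact hhadamard ▸ key
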